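/- arXiv:1703.07964 — 3 statements merged into one kernel-verified Lean document; each statement's English description precedes it below -/
import Mathlib

section
/- Let G be a simple directed graph with nonnegative edge weights. For every non-degenerate cycle W of G there is a simple non-degenerate cycle of G, each of whose edges is traversed by W, whose weight is at most w(W). Consequently, if G has a non-degenerate cycle, then the minimum weight over all non-degenerate cycles of G equals the minimum weight over all simple non-degenerate cycles of G. -/
open scoped ENNReal

/-- A simple directed graph on node type `V`, with nonnegative (extended-real)
edge weights: there are no self-loops, and between any ordered pair of nodes
there is at most one edge (so no parallel edges). -/
structure WDigraph (V : Type) where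
  Edge : V → V → Prop
  w : V → V → ℝ≥0∞
  irrefl : ∀ v, ¬ Edge v v

namespace WDigraph

variable {V : Type}

/-- The consecutive steps (directed edges) of a walk given as its list of nodes. -/
def steps (l : List V) : List (V × V) := l.zip l.tail

/-- `l` is a walk of `G` (nodes may repeat). -/
def IsWalk (G : WDigraph V) (l : List V) : Prop := l ≠ [] ∧ l.Chain' G.Edge

/-- `l` is an `s`-`t`-path of `G` (nodes may repeat). -/
def IsPath (G : WDigraph V) (s t : V) (l : List V) : Prop :=
  G.IsWalk l ∧ l.head? = some s ∧ l.getLast? = some t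

/-- The weight of a walk: the sum of the weights of its edges. -/
noncomputable def wWalk (G : WDigraph V) (l : List V) : ℝ≥0∞ :=
  ((steps l).map fun e => G.w e.1 e.2).sum

/-- A cycle of `G` is an `s`-`s`-path for some node `s`. -/
def IsCycle (G : WDigraph V) (l : List V) : Prop := ∃ s, G.IsPath s s l

/-- The walk `l` traverses the directed edge `(s,t)`. -/
def Traverses (l : List V) (s t : V) : Prop := (s, t) ∈ steps l

/-- A cycle is degenerate if it is a single node or traverses both `st` and `ts`. -/
def Degenerate (l : List V) : Prop :=
  l.length = 1 ∨ ∃ s t, Traverses l s t ∧ Traverses l t s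

/-- A simple cycle passes each node at most once. -/
def IsSimpleCycle (G : WDigraph V) (l : List V) : Prop :=
  G.IsCycle l ∧ l.dropLast.Nodup

/-- `G` is bidirected: `st` is an edge iff `ts` is an edge. -/
def Bidirected (G : WDigraph V) : Prop := ∀ u v, G.Edge u v → G.Edge v u

/-- `d_G(u,v)`: the minimum weight of a `u`-`v`-path, `∞` if there is none. -/
noncomputable def dist (G : WDigraph V) (s t : V) : ℝ≥0∞ :=
  sInf {x | ∃ l, G.IsPath s t l ∧ G.wWalk l = x}

end WDigraph

/-- A plane embedding of the (bidirected) graph with adjacency `A` on node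
type `V`: nodes are drawn as distinct points, each bundled pair of oppositely
directed edges is drawn as a single simple arc joining its endpoints, and two
arcs meet only at common endpoints and avoid all other nodes. -/
structure PlaneEmbedding {V : Type} (A : V → V → Prop) where
  pos : V → ℝ × ℝ
  arc : V → V → ℝ → ℝ × ℝ
  pos_inj : Function.Injective pos
  arc_cont : ∀ u v, A u v → ContinuousOn (arc u v) (Set.Icc 0 1)
  arc_start : ∀ u v, A u v → arc u v 0 = pos u
  arc_end : ∀ u v, A u v → arc u v 1 = pos v
  arc_inj : ∀ u v, A u v → Set.InjOn (arc u v) (Set.Icc 0 1)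
  arc_symm : ∀ u v, A u v → ∀ t, arc v u t = arc u v (1 - t)
  arc_avoid : ∀ u v, A u v → ∀ x : V, pos x ∈ arc u v '' Set.Icc 0 1 → x = u ∨ x = v
  arc_meet : ∀ u v x y, A u v → A x y → ({u, v} : Set V) ≠ {x, y} →
    arc u v '' Set.Icc 0 1 ∩ arc x y '' Set.Icc 0 1 ⊆ ({pos u, pos v} : Set (ℝ × ℝ)) ∩ {pos x, pos y}

/-- The drawing (point set in the plane) of a set of directed edges. -/
def PlaneEmbedding.drawing {V : Type} {A : V → V → Prop} (emb : PlaneEmbedding A)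
    (E : Set (V × V)) : Set (ℝ × ℝ) :=
  ⋃ e ∈ E, emb.arc e.1 e.2 '' Set.Icc 0 1

/-- The drawing of the whole graph. -/
def PlaneEmbedding.fullDrawing {V : Type} {A : V → V → Prop} (emb : PlaneEmbedding A) :
    Set (ℝ × ℝ) :=
  emb.drawing {e | A e.1 e.2}

/-- A face of the embedded graph: a connected component of the complement of
the drawing. -/
def PlaneEmbedding.IsFace {V : Type} {A : V → V → Prop} (emb : PlaneEmbedding A)
    (F : Set (ℝ × ℝ)) : Prop :=
  ∃ x, x ∉ emb.fullDrawing ∧ F = connectedComponentIn (emb.fullDrawing)ᶜ x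

/-!
If the interior `W.dropLast` of a cycle `W` repeats a node `v`, then `W` contains a closed
walk `v … v` as a contiguous piece. Its edges are edges of `W`, so it is again a cycle that
cannot traverse both `st` and `ts`, and since weights are nonnegative its weight is at most
`w(W)`. It is strictly shorter than `W`, so repeating this ends in a simple cycle.
-/

theorem List.exists_closed_infix_of_not_nodup {α : Type*} {l : List α} (h : ¬ l.Nodup) :
    ∃ v b, v :: b ++ [v] <:+: l := by
  induction l with
  | nil => simp at h
  | cons x l ih =>
    by_cases hx : x ∈ l
    · obtain ⟨b, c, rfl⟩ := List.append_of_mem hx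
      exact ⟨x, b, [], c, by simp⟩
    · obtain ⟨v, b, hb⟩ := ih (by simpa [hx] using h)
      exact ⟨v, b, hb.trans (List.suffix_cons x l).isInfix⟩

theorem List.IsSuffix.steps {V : Type} {l m : List V} (h : l <:+ m) :
    WDigraph.steps l <:+ WDigraph.steps m := by
  obtain ⟨a, rfl⟩ := h
  induction a with
  | nil => exact List.suffix_refl _
  | cons x a ih =>
    refine ih.trans ?_
    show WDigraph.steps (a ++ l) <:+ WDigraph.steps (x :: (a ++ l))
    cases a ++ l with
    | nil => exact List.nil_suffix
    | cons y r => exact List.suffix_cons (x, y) _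

theorem List.IsPrefix.steps {V : Type} {l m : List V} (h : l <+: m) :
    WDigraph.steps l <+: WDigraph.steps m := by
  obtain ⟨c, rfl⟩ := h
  induction l with
  | nil => exact List.nil_prefix
  | cons x l ih =>
    cases l with
    | nil => exact List.nil_prefix
    | cons y r => exact (List.prefix_cons_inj (x, y)).2 ih

theorem List.IsInfix.steps {V : Type} {l m : List V} (h : l <:+: m) :
    WDigraph.steps l <:+: WDigraph.steps m := by
  obtain ⟨p, hl, hp⟩ := List.infix_iff_suffix_prefix.1 h
  exact hl.steps.isInfix.trans hp.steps.isInfix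

namespace WDigraph

variable {V : Type} {G : WDigraph V} {l m : List V}

theorem Traverses.of_infix {s t : V} (h : l <:+: m) (hl : Traverses l s t) : Traverses m s t :=
  h.steps.subset hl

theorem wWalk_le_of_infix (G : WDigraph V) (h : l <:+: m) : G.wWalk l ≤ G.wWalk m :=
  (h.steps.map _).sublist.sum_le_sum fun _ _ => zero_le

theorem not_degenerate_of_infix (hm : ¬ Degenerate m) (h : l <:+: m) (hl : l.length ≠ 1) :
    ¬ Degenerate l := by
  rintro (hl' | ⟨s, t, hst, hts⟩)
  · exact hl hl'
  · exact hm (Or.inr ⟨s, t, hst.of_infix h, hts.of_infix h⟩)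

theorem IsWalk.infix (hm : G.IsWalk m) (hl : l ≠ []) (h : l <:+: m) : G.IsWalk l :=
  ⟨hl, hm.2.infix h⟩

theorem IsWalk.isCycle_of_closed_infix {v : V} {b : List V} (hm : G.IsWalk m)
    (h : v :: b ++ [v] <:+: m) : G.IsCycle (v :: b ++ [v]) :=
  ⟨v, hm.infix (by simp) h, rfl, List.getLast?_concat⟩

theorem IsCycle.exists_isSimpleCycle_le {W : List V} (hW : G.IsCycle W) (hW' : ¬ Degenerate W) :
    ∃ l, G.IsSimpleCycle l ∧ ¬ Degenerate l ∧ (∀ s t, Traverses l s t → Traverses W s t) ∧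
      G.wWalk l ≤ G.wWalk W := by
  by_cases hnd : W.dropLast.Nodup
  · exact ⟨W, ⟨hW, hnd⟩, hW', fun _ _ => id, le_rfl⟩
  obtain ⟨v, b, hb⟩ := List.exists_closed_infix_of_not_nodup hnd
  have hinf : v :: b ++ [v] <:+: W := hb.trans W.dropLast_prefix.isInfix
  obtain ⟨_, hwalk, -⟩ := hW
  have hlt : (v :: b ++ [v]).length < W.length :=
    calc _ ≤ W.dropLast.length := hb.length_le
      _ < W.length := by
        rw [List.length_dropLast]
        exact Nat.sub_lt (List.length_pos_iff.2 hwalk.1) one_pos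
  obtain ⟨l, hl, hl', htr, hw⟩ := (hwalk.isCycle_of_closed_infix hinf).exists_isSimpleCycle_le
    (not_degenerate_of_infix hW' hinf (by simp))
  exact ⟨l, hl, hl', fun s t h => (htr s t h).of_infix hinf, hw.trans (G.wWalk_le_of_infix hinf)⟩
termination_by W.length
decreasing_by simpa using hlt

end WDigraph

/-- Let `G` be a simple directed graph with nonnegative edge
weights.  For every non-degenerate cycle `W` of `G` there is a simple
non-degenerate cycle of `G`, each of whose edges is traversed by `W`, whose
weight is at most `w(W)`.  Consequently, if `G` has a non-degenerate cycle,
then the minimum weight over all non-degenerate cycles of `G` equals the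
minimum weight over all simple non-degenerate cycles of `G`. -/
theorem stmt3 {V : Type} (G : WDigraph V) :
    (∀ W, G.IsCycle W → ¬ WDigraph.Degenerate W →
      ∃ l, G.IsSimpleCycle l ∧ ¬ WDigraph.Degenerate l ∧
        (∀ s t, WDigraph.Traverses l s t → WDigraph.Traverses W s t) ∧
        G.wWalk l ≤ G.wWalk W) ∧
    ((∃ W, G.IsCycle W ∧ ¬ WDigraph.Degenerate W) →
      sInf {x | ∃ l, G.IsCycle l ∧ ¬ WDigraph.Degenerate l ∧ G.wWalk l = x} =
        sInf {x | ∃ l, G.IsSimpleCycle l ∧ ¬ WDigraph.Degenerate l ∧ G.wWalk l = x}) := by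
  refine ⟨fun W hW hW' => hW.exists_isSimpleCycle_le hW', fun _ => le_antisymm ?_ ?_⟩
  · exact sInf_le_sInf fun _ ⟨l, hl, hl', hx⟩ => ⟨l, hl.1, hl', hx⟩
  · refine le_sInf ?_
    rintro _ ⟨W, hW, hW', rfl⟩
    obtain ⟨l, hl, hl', -, hw⟩ := hW.exists_isSimpleCycle_le hW'
    exact sInf_le_of_le ⟨l, hl, hl', rfl⟩ hw
end

section
/- Let G be a simple directed graph with nonnegative edge weights and let W be a cycle of G that traverses an edge st but does not traverse the edge ts. Then G has a simple non-degenerate cycle containing the edge st, each of whose edges is traversed by W, and whose weight is at most w(W). -/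
open scoped ENNReal

/-!
Shortcutting: if the closed walk `W` repeats a node, it splits there into two shorter closed
walks whose traversed edges together are exactly those of `W` and whose weights add up to
`w(W)`; one of them still traverses `st`, and neither traverses `ts`, so we recurse.
When `W` is simple, its successor map is the cyclic permutation `formPerm` of `W.dropLast`.
If `W` traversed both `ab` and `ba`, the square of this permutation would fix `a` and hence be
the identity; then the successor `t` of `s` would have successor `s`, i.e. `W` would traverse `ts`.
-/

theorem List.formPerm_pow_eq_one_of_pow_apply_eq_self {α : Type*} [DecidableEq α] {l : List α}
    (hl : l.Nodup) {a : α} (ha : a ∈ l) {n : ℕ} (h : (l.formPerm ^ n) a = a) :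
    l.formPerm ^ n = 1 := by
  obtain ⟨i, hi, rfl⟩ := List.getElem_of_mem ha
  rw [List.formPerm_pow_apply_getElem _ hl, hl.getElem_inj_iff] at h
  have hdvd : l.length ∣ n := by
    have : i + n ≡ i + 0 [MOD l.length] := by
      rw [Nat.ModEq, h, add_zero, Nat.mod_eq_of_lt hi]
    exact Nat.modEq_zero_iff_dvd.mp (Nat.ModEq.add_left_cancel' i this)
  exact orderOf_dvd_iff_pow_eq_one.mp
    ((orderOf_dvd_of_pow_eq_one (List.formPerm_pow_length_eq_one_of_nodup _ hl)).trans hdvd)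

theorem List.exists_eq_append_cons_append_cons_of_not_nodup {α : Type*} {l : List α}
    (h : ¬ l.Nodup) : ∃ a X Y Z, l = X ++ a :: (Y ++ a :: Z) := by
  obtain ⟨a, ha⟩ : ∃ a, List.Sublist [a, a] l := by simpa [List.nodup_iff_sublist] using h
  obtain ⟨r₁, r₂, rfl, h₁, h₂⟩ := List.cons_sublist_iff.mp ha
  obtain ⟨X, Y, rfl⟩ := List.append_of_mem h₁
  obtain ⟨Y', Z, rfl⟩ := List.append_of_mem (List.singleton_sublist.mp h₂)
  exact ⟨a, X, Y ++ Y', Z, by simp⟩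

namespace WDigraph

variable {V : Type}

theorem isCycle_iff {G : WDigraph V} {l : List V} :
    G.IsCycle l ↔ G.IsWalk l ∧ l.head? = l.getLast? := by
  constructor
  · rintro ⟨s, hwalk, hhead, hlast⟩
    exact ⟨hwalk, hhead.trans hlast.symm⟩
  · rintro ⟨hwalk, hcl⟩
    exact ⟨l.head hwalk.1, hwalk, List.head?_eq_some_head hwalk.1,
      hcl ▸ List.head?_eq_some_head hwalk.1⟩

theorem mem_steps_iff {l : List V} {x y : V} :
    (x, y) ∈ steps l ↔ ∃ i, ∃ h : i + 1 < l.length, l[i] = x ∧ l[i + 1] = y := by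
  simp only [steps, List.mem_iff_getElem, List.getElem_zip, List.getElem_tail, List.length_zip,
    List.length_tail, Prod.mk.injEq]
  constructor
  · rintro ⟨i, hi, h⟩
    exact ⟨i, by omega, h⟩
  · rintro ⟨i, hi, h⟩
    exact ⟨i, by omega, h⟩

theorem getElem_succ_eq_getElem_dropLast {l : List V} (hcl : l.head? = l.getLast?) {i : ℕ}
    (hi : i + 1 < l.length) :
    l[i + 1] = l.dropLast[(i + 1) % l.dropLast.length]'
      (Nat.mod_lt _ (by simp only [List.length_dropLast]; omega)) := by
  rcases Nat.lt_or_ge (i + 1) l.dropLast.length with h | h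
  · simp only [Nat.mod_eq_of_lt h, List.getElem_dropLast]
  · have hlast : i + 1 = l.length - 1 := by simp only [List.length_dropLast] at h; omega
    simp only [List.length_dropLast, ← hlast, Nat.mod_self, List.getElem_dropLast]
    rw [List.head?_eq_getElem?, List.getLast?_eq_getElem?, ← hlast,
      List.getElem?_eq_getElem (by omega), List.getElem?_eq_getElem hi] at hcl
    exact (Option.some.inj hcl).symm

theorem mem_steps_iff_formPerm [DecidableEq V] {l : List V} (hcl : l.head? = l.getLast?)
    (hnd : l.dropLast.Nodup) {x y : V} :
    (x, y) ∈ steps l ↔ x ∈ l.dropLast ∧ l.dropLast.formPerm x = y := by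
  rw [mem_steps_iff]
  constructor
  · rintro ⟨i, hi, rfl, rfl⟩
    have hi' : i < l.dropLast.length := by simp only [List.length_dropLast]; omega
    rw [← List.getElem_dropLast hi', List.formPerm_apply_getElem _ hnd,
      getElem_succ_eq_getElem_dropLast hcl hi]
    exact ⟨List.getElem_mem _, rfl⟩
  · rintro ⟨hx, rfl⟩
    obtain ⟨i, hi, rfl⟩ := List.getElem_of_mem hx
    have hi' : i + 1 < l.length := by simp only [List.length_dropLast] at hi; omega
    refine ⟨i, hi', (List.getElem_dropLast ..).symm, ?_⟩
    rw [List.formPerm_apply_getElem _ hnd, getElem_succ_eq_getElem_dropLast hcl hi']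

theorem not_degenerate_of_nodup_dropLast [DecidableEq V] {l : List V}
    (hcl : l.head? = l.getLast?) (hnd : l.dropLast.Nodup) {s t : V}
    (hst : Traverses l s t) (hts : ¬ Traverses l t s) : ¬ Degenerate l := by
  simp only [Traverses, mem_steps_iff_formPerm hcl hnd] at hst hts
  obtain ⟨hs, rfl⟩ := hst
  rintro (hlen | ⟨a, b, hab, hba⟩)
  · obtain ⟨x, rfl⟩ := List.length_eq_one_iff.mp hlen
    simp at hs
  · simp only [Traverses, mem_steps_iff_formPerm hcl hnd] at hab hba
    have hsq : l.dropLast.formPerm ^ 2 = 1 :=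
      List.formPerm_pow_eq_one_of_pow_apply_eq_self hnd hab.1 (by
        rw [pow_two, Equiv.Perm.mul_apply, hab.2, hba.2])
    refine hts ⟨List.formPerm_apply_mem_of_mem hs, ?_⟩
    rw [← Equiv.Perm.mul_apply, ← pow_two, hsq, Equiv.Perm.one_apply]

theorem steps_append_cons (xs ys : List V) (v : V) :
    steps (xs ++ v :: ys) = steps (xs ++ [v]) ++ steps (v :: ys) := by
  induction xs with
  | nil => rfl
  | cons a xs ih =>
    cases xs with
    | nil => rfl
    | cons b xs =>
      simp only [List.cons_append] at ih ⊢
      exact congrArg ((a, b) :: ·) ih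

theorem steps_splice_perm (X Y Z : List V) (v : V) :
    (steps (X ++ v :: (Y ++ v :: Z))).Perm (steps (v :: Y ++ [v]) ++ steps (X ++ v :: Z)) := by
  rw [steps_append_cons X (Y ++ v :: Z), steps_append_cons X Z, ← List.cons_append,
    steps_append_cons (v :: Y) Z]
  exact List.perm_append_comm_assoc ..

theorem IsCycle.splice {G : WDigraph V} {X Y Z : List V} {v : V}
    (h : G.IsCycle (X ++ v :: (Y ++ v :: Z))) :
    G.IsCycle (v :: Y ++ [v]) ∧ G.IsCycle (X ++ v :: Z) := by
  obtain ⟨⟨-, hchain : List.IsChain G.Edge _⟩, hcl⟩ := isCycle_iff.mp h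
  rw [List.isChain_split, ← List.cons_append, List.isChain_split (l₁ := v :: Y)] at hchain
  obtain ⟨hX, hY, hZ⟩ := hchain
  refine ⟨isCycle_iff.mpr ⟨⟨by simp, hY⟩, by rw [List.getLast?_concat]; rfl⟩,
    isCycle_iff.mpr ⟨⟨by simp, List.isChain_split.mpr ⟨hX, hZ⟩⟩, ?_⟩⟩
  simpa only [List.head?_append, List.head?_cons, List.getLast?_append, List.getLast?_cons,
    Option.some_or, Option.getD_some] using hcl

theorem IsCycle.exists_split {G : WDigraph V} {W : List V} (hW : G.IsCycle W)
    (hnd : ¬ W.dropLast.Nodup) :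
    ∃ C₁ C₂, G.IsCycle C₁ ∧ G.IsCycle C₂ ∧ C₁.length < W.length ∧ C₂.length < W.length ∧
      (∀ a b, Traverses W a b ↔ Traverses C₁ a b ∨ Traverses C₂ a b) ∧
      G.wWalk W = G.wWalk C₁ + G.wWalk C₂ := by
  obtain ⟨v, X, Y, Z, hsplit⟩ := List.exists_eq_append_cons_append_cons_of_not_nodup hnd
  obtain ⟨z, hz⟩ : ∃ z, W = W.dropLast ++ [z] :=
    ⟨_, (List.dropLast_append_getLast (isCycle_iff.mp hW).1.1).symm⟩
  -- the repeat lies in `W.dropLast`, so `Z ++ [z]` is nonempty and the loop is shorter than `W`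
  have hW' : W = X ++ v :: (Y ++ v :: (Z ++ [z])) := by
    rw [hz, hsplit]
    simp
  rw [hW'] at hW ⊢
  have hperm := steps_splice_perm X Y (Z ++ [z]) v
  refine ⟨_, _, hW.splice.1, hW.splice.2, by simp; omega, by simp, fun a b => ?_, ?_⟩
  · simp only [Traverses, hperm.mem_iff, List.mem_append]
  · simp only [wWalk, (hperm.map _).sum_eq, List.map_append, List.sum_append]

theorem IsCycle.exists_isSimpleCycle {G : WDigraph V} {W : List V} (hW : G.IsCycle W) {s t : V}
    (hst : Traverses W s t) :
    ∃ l, G.IsSimpleCycle l ∧ Traverses l s t ∧ (∀ a b, Traverses l a b → Traverses W a b) ∧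
      G.wWalk l ≤ G.wWalk W := by
  by_cases hnd : W.dropLast.Nodup
  · exact ⟨W, ⟨hW, hnd⟩, hst, fun _ _ h => h, le_rfl⟩
  obtain ⟨C₁, C₂, hC₁, hC₂, hlen₁, hlen₂, htrav, hw⟩ := hW.exists_split hnd
  rcases (htrav s t).mp hst with h | h
  · obtain ⟨l, hl, hlst, hsub, hwl⟩ := hC₁.exists_isSimpleCycle h
    exact ⟨l, hl, hlst, fun a b hab => (htrav a b).mpr (.inl (hsub a b hab)),
      hwl.trans (hw ▸ le_self_add)⟩
  · obtain ⟨l, hl, hlst, hsub, hwl⟩ := hC₂.exists_isSimpleCycle h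
    exact ⟨l, hl, hlst, fun a b hab => (htrav a b).mpr (.inr (hsub a b hab)),
      hwl.trans (hw ▸ le_add_self)⟩
termination_by W.length

end WDigraph

/-- Let `G` be a simple directed graph with nonnegative edge
weights and let `W` be a cycle of `G` that traverses an edge `st` but does not
traverse the edge `ts`.  Then `G` has a simple non-degenerate cycle containing
the edge `st`, each of whose edges is traversed by `W`, and whose weight is at
most `w(W)`. -/
theorem stmt4 {V : Type} (G : WDigraph V) (W : List V) (s t : V)
    (hW : G.IsCycle W) (hst : WDigraph.Traverses W s t)
    (hts : ¬ WDigraph.Traverses W t s) :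
    ∃ l, G.IsSimpleCycle l ∧ ¬ WDigraph.Degenerate l ∧ WDigraph.Traverses l s t ∧
      (∀ a b, WDigraph.Traverses l a b → WDigraph.Traverses W a b) ∧
      G.wWalk l ≤ G.wWalk W := by
  classical
  obtain ⟨l, hl, hlst, hsub, hwl⟩ := hW.exists_isSimpleCycle hst
  have hcl := (WDigraph.isCycle_iff.mp hl.1).2
  have hnondeg := WDigraph.not_degenerate_of_nodup_dropLast hcl hl.2 hlst (hts ∘ hsub t s)
  exact ⟨l, hl, hnondeg, hlst, hsub, hwl⟩
end

section
/- Let G be a simple bidirected graph with nonnegative edge weights and let y be a node of G with exactly two neighbors x and z, where x and z are not adjacent in G. Let G' be obtained from G by deleting y and its four incident edges and adding edges xz with weight w(xy)+w(yz) and zx with weight w(zy)+w(yx). Then G has a non-degenerate cycle if and only if G' does, and in that case the minimum weight of a non-degenerate cycle of G equals the minimum weight of a non-degenerate cycle of G'. -/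
open scoped ENNReal

/-!
A non-degenerate cycle can pass through `y` only as `x → y → z` or `z → y → x`, since
`a → y → a` traverses both `ay` and `ya`. Rotated to start away from `y`, such a cycle becomes
a cycle of `G'` by deleting `y`, each passage turning into the shortcut `xz` or `zx`;
conversely, expanding every shortcut of a cycle of `G'` into its passage through `y` undoes
this. Both maps preserve the weight, and opposite edges traversed on one side correspond to
opposite edges traversed on the other, so the two sets of weights of non-degenerate cycles
coincide.
-/

namespace WDigraph

variable {V : Type}

section Steps

variable {α : Type}

@[simp]
lemma steps_cons_cons (a b : α) (l : List α) : steps (a :: b :: l) = (a, b) :: steps (b :: l) :=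
  rfl

lemma steps_cons_of_head? {a b : α} {l : List α} (h : l.head? = some b) :
    steps (a :: l) = (a, b) :: steps l := by
  cases l with
  | nil => simp at h
  | cons c l => simp_all

lemma steps_map {β : Type} (f : α → β) (l : List α) :
    steps (l.map f) = (steps l).map (Prod.map f f) := by
  simp [steps, ← List.map_tail, List.zip_map]

lemma steps_append_singleton (l : List α) (hl : l ≠ []) (c : α) :
    steps (l ++ [c]) = steps l ++ [(l.getLast hl, c)] := by
  induction l with
  | nil => contradiction
  | cons a t ih =>
    cases t with
    | nil => rfl
    | cons b t =>
      have h := ih (List.cons_ne_nil b t)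
      simp only [List.cons_append] at h ⊢
      rw [steps_cons_cons, h, List.getLast_cons_cons]
      rfl

lemma mem_of_mem_steps {p : α × α} {l : List α} (h : p ∈ steps l) : p.1 ∈ l ∧ p.2 ∈ l :=
  ⟨(List.of_mem_zip h).1, List.mem_of_mem_tail (List.of_mem_zip h).2⟩

lemma isChain_iff_forall_mem_steps {R : α → α → Prop} {l : List α} :
    l.IsChain R ↔ ∀ p ∈ steps l, R p.1 p.2 := by
  induction l using List.twoStepInduction with
  | nil => simp [steps]
  | singleton a => simp [steps]
  | cons_cons a b t _ ih => simp [ih]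

end Steps

lemma wWalk_eq_of_perm (G : WDigraph V) {l₁ l₂ : List V} (h : (steps l₁).Perm (steps l₂)) :
    G.wWalk l₁ = G.wWalk l₂ :=
  (h.map _).sum_eq

lemma degenerate_congr {l₁ l₂ : List V} (hlen : l₁.length = l₂.length)
    (h : ∀ p, p ∈ steps l₁ ↔ p ∈ steps l₂) : Degenerate l₁ ↔ Degenerate l₂ := by
  simp only [Degenerate, Traverses, hlen, h]

variable {G : WDigraph V}

lemma IsWalk.edge_of_mem_steps {l : List V} (hl : G.IsWalk l) {p : V × V} (hp : p ∈ steps l) :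
    G.Edge p.1 p.2 :=
  isChain_iff_forall_mem_steps.1 hl.2 p hp

lemma IsCycle.isWalk {l : List V} (hl : G.IsCycle l) : G.IsWalk l :=
  hl.choose_spec.1

lemma IsCycle.exists_rotation_head_ne {l : List V} (hl : G.IsCycle l) (hnd : ¬ Degenerate l)
    (y : V) :
    ∃ l', G.IsCycle l' ∧ l'.head? ≠ some y ∧ ¬ Degenerate l' ∧ G.wWalk l' = G.wWalk l := by
  obtain ⟨s, hwalk, hhead, hlast⟩ := hl
  by_cases hsy : s = y
  swap
  · exact ⟨l, ⟨s, hwalk, hhead, hlast⟩, by rwa [hhead, Ne, Option.some_inj], hnd, rfl⟩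
  subst hsy
  rcases l with _ | ⟨a, _ | ⟨b, t⟩⟩
  · exact absurd rfl hwalk.1
  · exact absurd (Or.inl rfl) hnd
  obtain rfl : a = s := by simpa using hhead
  have hb : b ≠ a := fun h => G.irrefl a (h ▸ hwalk.edge_of_mem_steps (p := (a, b)) (by simp))
  have hsteps : steps ((b :: t) ++ [b]) = steps (b :: t) ++ [(a, b)] := by
    rw [steps_append_singleton _ (List.cons_ne_nil b t),
      (List.getLast_eq_iff_getLast?_eq_some _).2 (by rwa [List.getLast?_cons_cons] at hlast)]
  have hperm : (steps ((b :: t) ++ [b])).Perm (steps (a :: b :: t)) := by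
    rw [hsteps, steps_cons_cons]
    exact List.perm_append_singleton _ _
  refine ⟨(b :: t) ++ [b], ⟨b, ⟨by simp, ?_⟩, by simp, List.getLast?_concat⟩, by simpa using hb,
    ?_, G.wWalk_eq_of_perm hperm⟩
  · exact isChain_iff_forall_mem_steps.2 fun p hp => hwalk.edge_of_mem_steps (hperm.mem_iff.1 hp)
  · rwa [degenerate_congr (by simp) fun p => hperm.mem_iff]

section Map

variable {W : Type} {f : W → V} {G' : WDigraph W}

lemma isWalk_map_iff (hE : ∀ a b, G.Edge (f a) (f b) ↔ G'.Edge a b) {l : List W} :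
    G.IsWalk (l.map f) ↔ G'.IsWalk l := by
  refine and_congr (by simp) ((List.isChain_map f).trans ?_)
  simp only [hE]
  rfl

lemma isCycle_map_iff (hf : f.Injective) (hE : ∀ a b, G.Edge (f a) (f b) ↔ G'.Edge a b)
    {l : List W} : G.IsCycle (l.map f) ↔ G'.IsCycle l := by
  simp only [IsCycle, IsPath, isWalk_map_iff hE, List.head?_map, List.getLast?_map]
  constructor
  · rintro ⟨s, hwalk, hhead, hlast⟩
    obtain ⟨a, ha, rfl⟩ := Option.map_eq_some_iff.1 hhead
    obtain ⟨b, hb, hab⟩ := Option.map_eq_some_iff.1 hlast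
    exact ⟨a, hwalk, ha, hf hab ▸ hb⟩
  · rintro ⟨s, hwalk, hhead, hlast⟩
    exact ⟨f s, hwalk, by simp [hhead], by simp [hlast]⟩

lemma wWalk_map (hw : ∀ a b, G'.Edge a b → G.w (f a) (f b) = G'.w a b) {l : List W}
    (hl : G'.IsWalk l) : G.wWalk (l.map f) = G'.wWalk l := by
  simp only [wWalk, steps_map, List.map_map]
  exact congrArg List.sum (List.map_congr_left fun p hp => hw _ _ (hl.edge_of_mem_steps hp))

lemma degenerate_map_iff (hf : f.Injective) {l : List W} :
    Degenerate (l.map f) ↔ Degenerate l := by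
  simp [Degenerate, Traverses, steps_map, hf.eq_iff]

end Map

theorem exists_cycle_subtype_iff {p : V → Prop} {G' : WDigraph {a // p a}}
    (hE : ∀ a b, G'.Edge a b ↔ G.Edge a b) (hw : ∀ a b, G'.Edge a b → G'.w a b = G.w a b)
    (c : ℝ≥0∞) :
    (∃ l, G'.IsCycle l ∧ ¬ Degenerate l ∧ G'.wWalk l = c) ↔
      ∃ m, G.IsCycle m ∧ (∀ v ∈ m, p v) ∧ ¬ Degenerate m ∧ G.wWalk m = c := by
  have hE' : ∀ a b : {a // p a}, G.Edge a b ↔ G'.Edge a b := fun a b => (hE a b).symm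
  have hw' : ∀ a b : {a // p a}, G'.Edge a b → G.w a b = G'.w a b := fun a b h => (hw a b h).symm
  constructor
  · rintro ⟨l, hl, hnd, rfl⟩
    exact ⟨l.map Subtype.val, (isCycle_map_iff Subtype.val_injective hE').2 hl,
      fun v hv => by obtain ⟨a, -, rfl⟩ := List.mem_map.1 hv; exact a.2,
      (degenerate_map_iff Subtype.val_injective).not.2 hnd, wWalk_map hw' hl.isWalk⟩
  · rintro ⟨m, hm, hp, hnd, rfl⟩
    lift m to List {a // p a} using hp
    have hm := (isCycle_map_iff Subtype.val_injective hE').1 hm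
    exact ⟨m, hm, (degenerate_map_iff Subtype.val_injective).not.1 hnd,
      (wWalk_map hw' hm.isWalk).symm⟩

def IsShortcut (x z u v : V) : Prop := (u = x ∧ v = z) ∨ (u = z ∧ v = x)

lemma isShortcut_comm {x z u v : V} : IsShortcut x z u v ↔ IsShortcut x z v u := by
  unfold IsShortcut; tauto

lemma IsShortcut.left_eq_of_right_eq {x z u v u' : V} (h : IsShortcut x z u v)
    (h' : IsShortcut x z u' v) : u = u' := by
  unfold IsShortcut at h h'; grind

lemma IsShortcut.right_eq_of_left_eq {x z u v v' : V} (h : IsShortcut x z u v)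
    (h' : IsShortcut x z u v') : v = v' :=
  (isShortcut_comm.1 h).left_eq_of_right_eq (isShortcut_comm.1 h')

/-- The graph `G'` of the theorem, except that `y` and its edges are kept. -/
noncomputable def bypass (G : WDigraph V) (x y z : V) (hxz : x ≠ z) : WDigraph V where
  Edge u v := G.Edge u v ∨ IsShortcut x z u v
  w u v := open Classical in if IsShortcut x z u v then G.w u y + G.w y v else G.w u v
  irrefl v := by
    rintro (h | ⟨rfl, h⟩ | ⟨rfl, h⟩)
    exacts [G.irrefl v h, hxz h, hxz h.symm]

open Classical in
noncomputable def detour (x y z : V) (p : V × V) : List (V × V) :=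
  if IsShortcut x z p.1 p.2 then [(p.1, y), (y, p.2)] else [p]

open Classical in
noncomputable def expandShortcuts (x y z : V) : List V → List V
  | [] => []
  | [a] => [a]
  | a :: b :: t =>
    if IsShortcut x z a b then a :: y :: expandShortcuts x y z (b :: t)
    else a :: expandShortcuts x y z (b :: t)

variable {x y z : V}

lemma bypass_w_of_isShortcut (hxz : x ≠ z) {u v : V} (h : IsShortcut x z u v) :
    (G.bypass x y z hxz).w u v = G.w u y + G.w y v :=
  if_pos h

lemma bypass_w_of_not_isShortcut (hxz : x ≠ z) {u v : V} (h : ¬ IsShortcut x z u v) :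
    (G.bypass x y z hxz).w u v = G.w u v :=
  if_neg h

lemma not_isShortcut_of_edge (hbi : G.Bidirected) (hnadj : ¬ G.Edge x z) {u v : V}
    (h : G.Edge u v) : ¬ IsShortcut x z u v := by
  rintro (⟨rfl, rfl⟩ | ⟨rfl, rfl⟩)
  exacts [hnadj h, hnadj (hbi _ _ h)]

lemma detour_of_isShortcut {p : V × V} (h : IsShortcut x z p.1 p.2) :
    detour x y z p = [(p.1, y), (y, p.2)] :=
  if_pos h

lemma detour_of_not_isShortcut {p : V × V} (h : ¬ IsShortcut x z p.1 p.2) :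
    detour x y z p = [p] :=
  if_neg h

lemma exists_mem_detour (p : V × V) : ∃ r, r ∈ detour x y z p := by
  unfold detour; split <;> simp

lemma detour_swap (p : V × V) :
    detour x y z p.swap = ((detour x y z p).map Prod.swap).reverse := by
  by_cases h : IsShortcut x z p.1 p.2
  · rw [detour_of_isShortcut h, detour_of_isShortcut (isShortcut_comm.1 h)]
    simp
  · rw [detour_of_not_isShortcut h, detour_of_not_isShortcut (mt isShortcut_comm.2 h)]
    simp

lemma swap_mem_detour_swap {p r : V × V} (h : r ∈ detour x y z p) :
    r.swap ∈ detour x y z p.swap := by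
  simpa [detour_swap] using h

lemma eq_of_mem_detour {p q r : V × V} (hp : p.1 ≠ y ∧ p.2 ≠ y) (hq : q.1 ≠ y ∧ q.2 ≠ y)
    (hrp : r ∈ detour x y z p) (hrq : r ∈ detour x y z q) : p = q := by
  unfold detour at hrp hrq
  split_ifs at hrp hrq <;> grind [IsShortcut.right_eq_of_left_eq, IsShortcut.left_eq_of_right_eq]

lemma expandShortcuts_cons_cons_of_isShortcut {a b : V} (t : List V) (h : IsShortcut x z a b) :
    expandShortcuts x y z (a :: b :: t) = a :: y :: expandShortcuts x y z (b :: t) := by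
  rw [expandShortcuts, if_pos h]

lemma expandShortcuts_cons_cons_of_not_isShortcut {a b : V} (t : List V)
    (h : ¬ IsShortcut x z a b) :
    expandShortcuts x y z (a :: b :: t) = a :: expandShortcuts x y z (b :: t) := by
  rw [expandShortcuts, if_neg h]

lemma head?_expandShortcuts (l : List V) : (expandShortcuts x y z l).head? = l.head? := by
  match l with
  | [] | [_] => rfl
  | a :: b :: t =>
    by_cases h : IsShortcut x z a b
    · rw [expandShortcuts_cons_cons_of_isShortcut _ h]; rfl
    · rw [expandShortcuts_cons_cons_of_not_isShortcut _ h]; rfl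

lemma expandShortcuts_eq_nil_iff {l : List V} : expandShortcuts x y z l = [] ↔ l = [] := by
  rw [← List.head?_eq_none_iff, ← List.head?_eq_none_iff, head?_expandShortcuts]

lemma getLast?_expandShortcuts (l : List V) :
    (expandShortcuts x y z l).getLast? = l.getLast? := by
  induction l using List.twoStepInduction with
  | nil | singleton => rfl
  | cons_cons a b t _ ih =>
    by_cases h : IsShortcut x z a b
    · simp [expandShortcuts_cons_cons_of_isShortcut _ h, List.getLast?_cons, ih]
    · simp [expandShortcuts_cons_cons_of_not_isShortcut _ h, List.getLast?_cons, ih]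

lemma length_expandShortcuts_eq_one_iff (l : List V) :
    (expandShortcuts x y z l).length = 1 ↔ l.length = 1 := by
  match l with
  | [] | [_] => rfl
  | a :: b :: t =>
    have hne : expandShortcuts x y z (b :: t) ≠ [] := by simp [expandShortcuts_eq_nil_iff]
    by_cases h : IsShortcut x z a b
    · simp [expandShortcuts_cons_cons_of_isShortcut _ h]
    · simp [expandShortcuts_cons_cons_of_not_isShortcut _ h, hne]

lemma steps_expandShortcuts (l : List V) :
    steps (expandShortcuts x y z l) = (steps l).flatMap (detour x y z) := by
  induction l using List.twoStepInduction with
  | nil | singleton => rfl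
  | cons_cons a b t _ ih =>
    have hhead := head?_expandShortcuts (x := x) (y := y) (z := z) (b :: t)
    by_cases h : IsShortcut x z a b
    · rw [expandShortcuts_cons_cons_of_isShortcut _ h, steps_cons_cons,
        steps_cons_of_head? (b := b) hhead, ih b, steps_cons_cons, List.flatMap_cons,
        detour_of_isShortcut h]
      rfl
    · rw [expandShortcuts_cons_cons_of_not_isShortcut _ h, steps_cons_of_head? (b := b) hhead,
        ih b, steps_cons_cons, List.flatMap_cons, detour_of_not_isShortcut h]
      rfl

lemma wWalk_expandShortcuts (hxz : x ≠ z) (l : List V) :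
    G.wWalk (expandShortcuts x y z l) = (G.bypass x y z hxz).wWalk l := by
  simp only [wWalk, steps_expandShortcuts, List.flatMap_def, List.map_flatten, List.sum_flatten,
    List.map_map]
  refine congrArg List.sum (List.map_congr_left fun q _ => ?_)
  by_cases hq : IsShortcut x z q.1 q.2
  · simp [detour_of_isShortcut hq, bypass_w_of_isShortcut hxz hq]
  · simp [detour_of_not_isShortcut hq, bypass_w_of_not_isShortcut hxz hq]

lemma isWalk_expandShortcuts_iff (hxz : x ≠ z) (hbi : G.Bidirected) (hyx : G.Edge y x)
    (hyz : G.Edge y z) {l : List V} :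
    G.IsWalk (expandShortcuts x y z l) ↔ (G.bypass x y z hxz).IsWalk l := by
  have hy : ∀ v, v = x ∨ v = z → G.Edge v y ∧ G.Edge y v := by
    rintro v (rfl | rfl)
    exacts [⟨hbi _ _ hyx, hyx⟩, ⟨hbi _ _ hyz, hyz⟩]
  refine and_congr (not_congr expandShortcuts_eq_nil_iff) <| isChain_iff_forall_mem_steps.trans <|
    Iff.trans ?_ isChain_iff_forall_mem_steps.symm
  simp only [steps_expandShortcuts, List.mem_flatMap, forall_exists_index, and_imp]
  constructor
  · intro h q hq
    by_cases hs : IsShortcut x z q.1 q.2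
    · exact Or.inr hs
    · exact Or.inl (h q q hq (by simp [detour_of_not_isShortcut hs]))
  · intro h r q hq hr
    by_cases hs : IsShortcut x z q.1 q.2
    · rw [detour_of_isShortcut hs] at hr
      have h₁ : q.1 = x ∨ q.1 = z := by unfold IsShortcut at hs; tauto
      have h₂ : q.2 = x ∨ q.2 = z := by unfold IsShortcut at hs; tauto
      simp only [List.mem_cons, List.not_mem_nil, or_false] at hr
      rcases hr with rfl | rfl
      exacts [(hy _ h₁).1, (hy _ h₂).2]
    · rw [detour_of_not_isShortcut hs, List.mem_singleton] at hr
      exact hr ▸ (h q hq).resolve_right hs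

lemma isCycle_expandShortcuts_iff (hxz : x ≠ z) (hbi : G.Bidirected) (hyx : G.Edge y x)
    (hyz : G.Edge y z) {l : List V} :
    G.IsCycle (expandShortcuts x y z l) ↔ (G.bypass x y z hxz).IsCycle l := by
  simp only [IsCycle, IsPath, isWalk_expandShortcuts_iff hxz hbi hyx hyz, head?_expandShortcuts,
    getLast?_expandShortcuts]

lemma degenerate_expandShortcuts_iff {l : List V} (hl : ∀ v ∈ l, v ≠ y) :
    Degenerate (expandShortcuts x y z l) ↔ Degenerate l := by
  have hoff : ∀ q ∈ steps l, q.1 ≠ y ∧ q.2 ≠ y := fun q hq =>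
    ⟨hl _ (mem_of_mem_steps hq).1, hl _ (mem_of_mem_steps hq).2⟩
  simp only [Degenerate, Traverses, length_expandShortcuts_eq_one_iff, steps_expandShortcuts,
    List.mem_flatMap]
  refine or_congr_right ⟨?_, ?_⟩
  · rintro ⟨u, v, ⟨p, hp, hp'⟩, ⟨q, hq, hq'⟩⟩
    obtain rfl : p = q.swap :=
      eq_of_mem_detour (hoff p hp) (hoff q hq).symm hp' (swap_mem_detour_swap hq')
    exact ⟨q.2, q.1, hp, hq⟩
  · rintro ⟨u, v, huv, hvu⟩
    obtain ⟨r, hr⟩ := exists_mem_detour (x := x) (y := y) (z := z) (u, v)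
    exact ⟨r.1, r.2, ⟨_, huv, hr⟩, ⟨_, hvu, swap_mem_detour_swap hr⟩⟩

lemma expandShortcuts_filter_ne [DecidableEq V] (hbi : G.Bidirected)
    (hnb : ∀ a, G.Edge y a ↔ a = x ∨ a = z) (hnadj : ¬ G.Edge x z) {l : List V}
    (hl : l.IsChain G.Edge) (hhead : l.head? ≠ some y) (hlast : l.getLast? ≠ some y)
    (hback : ∀ a, (a, y) ∈ steps l → (y, a) ∉ steps l) :
    expandShortcuts x y z (l.filter (· ≠ y)) = l := by
  have hkeep : ∀ {v : V} (l : List V), v ≠ y → (v :: l).filter (· ≠ y) = v :: l.filter (· ≠ y) :=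
    fun _ h => by rw [List.filter_cons, if_pos (decide_eq_true h)]
  have hdrop : ∀ l : List V, (y :: l).filter (· ≠ y) = l.filter (· ≠ y) :=
    fun _ => by rw [List.filter_cons, if_neg (by simp)]
  induction l using List.twoStepInduction with
  | nil => rfl
  | singleton a => simp_all [expandShortcuts]
  | cons_cons a b t ih_t ih =>
    have ha : a ≠ y := by simpa using hhead
    have hab : G.Edge a b := (List.isChain_cons_cons.1 hl).1
    have hl' := (List.isChain_cons_cons.1 hl).2
    by_cases hb : b = y
    · subst b
      obtain ⟨c, t, rfl⟩ : ∃ c t', t = c :: t' := by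
        cases t with
        | nil => simp at hlast
        | cons c t' => exact ⟨c, t', rfl⟩
      have hyc : G.Edge y c := (List.isChain_cons_cons.1 hl').1
      have hc : c ≠ y := fun h => G.irrefl y (h ▸ hyc)
      have hac : IsShortcut x z a c := by
        have ha' := (hnb a).1 (hbi _ _ hab)
        have hc' := (hnb c).1 hyc
        have hac : a ≠ c := by rintro rfl; exact hback a (by simp) (by simp)
        unfold IsShortcut; grind
      have hrest := ih_t (List.isChain_cons_cons.1 hl').2 (by simpa using hc) (by simpa using hlast)
        (fun a h h' => hback a (by simp [h]) (by simp [h']))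
      rw [hkeep _ ha, hdrop, hkeep _ hc, expandShortcuts_cons_cons_of_isShortcut _ hac,
        ← hkeep _ hc, hrest]
    · have hrest := ih b hl' (by simpa using hb) (by simpa using hlast)
        (fun a h h' => hback a (by simp [h]) (by simp [h']))
      rw [hkeep _ ha, hkeep _ hb,
        expandShortcuts_cons_cons_of_not_isShortcut _ (not_isShortcut_of_edge hbi hnadj hab),
        ← hkeep _ hb, hrest]

theorem exists_cycle_iff_exists_bypass_cycle (hbi : G.Bidirected) (hxz : x ≠ z)
    (hnb : ∀ a, G.Edge y a ↔ a = x ∨ a = z) (hnadj : ¬ G.Edge x z) (c : ℝ≥0∞) :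
    (∃ l, G.IsCycle l ∧ ¬ Degenerate l ∧ G.wWalk l = c) ↔
      ∃ m, (G.bypass x y z hxz).IsCycle m ∧ (∀ v ∈ m, v ≠ y) ∧ ¬ Degenerate m ∧
        (G.bypass x y z hxz).wWalk m = c := by
  have hyx : G.Edge y x := (hnb x).2 (Or.inl rfl)
  have hyz : G.Edge y z := (hnb z).2 (Or.inr rfl)
  constructor
  · rintro ⟨l, hl, hnd, rfl⟩
    classical
    obtain ⟨l, hl, hhead, hnd, hw⟩ := hl.exists_rotation_head_ne hnd y
    obtain ⟨s, hwalk, hs, hs'⟩ := id hl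
    have hexp : expandShortcuts x y z (l.filter (· ≠ y)) = l :=
      expandShortcuts_filter_ne hbi hnb hnadj hwalk.2 hhead (by rwa [hs', ← hs])
        fun a h h' => hnd (Or.inr ⟨a, y, h, h'⟩)
    have havoid : ∀ v ∈ l.filter (· ≠ y), v ≠ y := by simp
    refine ⟨l.filter (· ≠ y), ?_, havoid, ?_, ?_⟩
    · rwa [← isCycle_expandShortcuts_iff hxz hbi hyx hyz, hexp]
    · rwa [← degenerate_expandShortcuts_iff havoid, hexp]
    · rw [← wWalk_expandShortcuts, hexp, hw]
  · rintro ⟨m, hm, havoid, hnd, rfl⟩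
    exact ⟨expandShortcuts x y z m, (isCycle_expandShortcuts_iff hxz hbi hyx hyz).2 hm,
      (degenerate_expandShortcuts_iff havoid).not.2 hnd, wWalk_expandShortcuts hxz m⟩

end WDigraph

/-- Let `G` be a simple bidirected graph with nonnegative
edge weights and let `y` be a node of `G` with exactly two neighbors `x` and
`z`, where `x` and `z` are not adjacent in `G`.  Let `G'` be obtained from `G`
by deleting `y` and its four incident edges and adding edges `xz` with weight
`w(xy) + w(yz)` and `zx` with weight `w(zy) + w(yx)`.  Then `G` has a
non-degenerate cycle iff `G'` does, and in that case the minimum weight of a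
non-degenerate cycle of `G` equals the minimum weight of a non-degenerate
cycle of `G'`. -/
theorem stmt7 {V : Type} (G : WDigraph V) (hbi : G.Bidirected)
    (y x z : V) (hxz : x ≠ z)
    (hnb : ∀ a : V, G.Edge y a ↔ (a = x ∨ a = z))
    (hnadj : ¬ G.Edge x z)
    (G' : WDigraph {a : V // a ≠ y})
    (hE : ∀ a b : {a : V // a ≠ y},
      G'.Edge a b ↔ (G.Edge (a : V) (b : V) ∨
        ((a : V) = x ∧ (b : V) = z) ∨ ((a : V) = z ∧ (b : V) = x)))
    (hw1 : ∀ a b : {a : V // a ≠ y}, G.Edge (a : V) (b : V) →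
      G'.w a b = G.w (a : V) (b : V))
    (hw2 : ∀ a b : {a : V // a ≠ y}, (a : V) = x → (b : V) = z →
      G'.w a b = G.w x y + G.w y z)
    (hw3 : ∀ a b : {a : V // a ≠ y}, (a : V) = z → (b : V) = x →
      G'.w a b = G.w z y + G.w y x) :
    ((∃ l, G.IsCycle l ∧ ¬ WDigraph.Degenerate l) ↔
      (∃ l, G'.IsCycle l ∧ ¬ WDigraph.Degenerate l)) ∧
    ((∃ l, G.IsCycle l ∧ ¬ WDigraph.Degenerate l) →
      sInf {x | ∃ l, G.IsCycle l ∧ ¬ WDigraph.Degenerate l ∧ G.wWalk l = x} =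
        sInf {x | ∃ l, G'.IsCycle l ∧ ¬ WDigraph.Degenerate l ∧ G'.wWalk l = x}) := by
  have hw : ∀ a b, G'.Edge a b → G'.w a b = (G.bypass x y z hxz).w a b := by
    intro a b hab
    rcases (hE a b).1 hab with h | ⟨ha, hb⟩ | ⟨ha, hb⟩
    · rw [hw1 a b h, WDigraph.bypass_w_of_not_isShortcut hxz
        (WDigraph.not_isShortcut_of_edge hbi hnadj h)]
    · rw [hw2 a b ha hb, WDigraph.bypass_w_of_isShortcut hxz (Or.inl ⟨ha, hb⟩), ha, hb]
    · rw [hw3 a b ha hb, WDigraph.bypass_w_of_isShortcut hxz (Or.inr ⟨ha, hb⟩), ha, hb]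
  have key : ∀ c, (∃ l, G.IsCycle l ∧ ¬ WDigraph.Degenerate l ∧ G.wWalk l = c) ↔
      ∃ l, G'.IsCycle l ∧ ¬ WDigraph.Degenerate l ∧ G'.wWalk l = c := fun c =>
    (WDigraph.exists_cycle_iff_exists_bypass_cycle hbi hxz hnb hnadj c).trans
      (WDigraph.exists_cycle_subtype_iff hE hw c).symm
  refine ⟨⟨fun ⟨l, hl, hnd⟩ => ?_, fun ⟨l, hl, hnd⟩ => ?_⟩, fun _ => congrArg sInf (Set.ext key)⟩
  · obtain ⟨l', hl', hnd', -⟩ := (key _).1 ⟨l, hl, hnd, rfl⟩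
    exact ⟨l', hl', hnd'⟩
  · obtain ⟨l', hl', hnd', -⟩ := (key _).2 ⟨l, hl, hnd, rfl⟩
    exact ⟨l', hl', hnd'⟩
end
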